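/- arXiv:2302.08135 — 2 statements merged into one kernel-verified Lean document; each statement's English description precedes it below -/
import Mathlib

section
/- Under TRDM, truthful bidding is optimal for any agent who holds the highest valuation in the subtree rooted at itself: let the true valuations v_j ≥ 0 be pairwise distinct, let every agent j ≠ i bid truthfully (b_j = v_j), and suppose v_i = max over {i} ∪ D_i of the true valuations. Then for every bid b_i ≥ 0 that is distinct from all other agents' bids, agent i's TRDM utility when bidding b_i is at most its TRDM utility when bidding its true valuation v_i. -/
open Classical

/-- A finite directed tree rooted at the seller `s`: every vertex reaches `s`
by iterating the parent map, and the root is its own parent. The agents are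
the non-root vertices. -/
structure DiffusionTree (α : Type*) where
  s : α
  parent : α → α
  parent_s : parent s = s
  reaches_s : ∀ x : α, ∃ n : ℕ, parent^[n] x = s

namespace DiffusionTree

variable {α : Type*} [Fintype α]

/-- The set of agents: all vertices except the seller. -/
noncomputable def agents (T : DiffusionTree α) : Finset α :=
  Finset.univ.filter (fun x => x ≠ T.s)

/-- `T.desc i j` : `j` is a strict descendant of `i`. -/
def desc (T : DiffusionTree α) (i j : α) : Prop :=
  ∃ n : ℕ, 0 < n ∧ T.parent^[n] j = i

/-- `V_{-i}` relative to the active agent set `A`: remove `i` and its descendants. -/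
noncomputable def Vminus (T : DiffusionTree α) (A : Finset α) (i : α) : Finset α :=
  A.filter (fun j => j ≠ i ∧ ¬ T.desc i j)

/-- `b*_S`: the highest bid in `S`, with `b*_∅ = 0`. -/
noncomputable def bstar (b : α → ℝ) (S : Finset α) : ℝ :=
  WithBot.unbotD 0 ((S.image b).max)

/-- Distance from a vertex to the root. -/
noncomputable def depth (T : DiffusionTree α) (x : α) : ℕ :=
  Nat.find (T.reaches_s x)

/-- The vertex `a_j` on the path `s = a_0, a_1, …, a_k = w` from `s` to `w`. -/
noncomputable def pathVx (T : DiffusionTree α) (w : α) (j : ℕ) : α :=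
  T.parent^[T.depth w - j] w

/-- TRDM payments, on the active agent set `A`, for bids `b` and winner `w`:
the winner pays `b*_{V_{-w}}`; an intermediate path agent `a_j` pays
`b*_{V_{-a_j}} − b*_{V_{-a_{j+1}}}`; everyone else pays `0`. -/
noncomputable def payment (T : DiffusionTree α) (A : Finset α) (b : α → ℝ)
    (w : α) (x : α) : ℝ :=
  if x = w then bstar b (T.Vminus A w)
  else if ∃ j : ℕ, 1 ≤ j ∧ j < T.depth w ∧ T.pathVx w j = x then
    bstar b (T.Vminus A x) - bstar b (T.Vminus A (T.pathVx w (T.depth x + 1)))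
  else 0

/-- TRDM utility of an agent `i` with true valuation `v`. -/
noncomputable def util (T : DiffusionTree α) (A : Finset α) (b : α → ℝ)
    (w : α) (v : ℝ) (i : α) : ℝ :=
  (if i = w then v else 0) - T.payment A b w i

end DiffusionTree

/-!
If `i` wins at the truthful profile it pays `b*_{V_{-i}}`, which its own bid cannot influence;
a deviation that makes it lose earns it at most the highest remaining bid, which is below `v_i`.
If `i` loses at the truthful profile, the winner is not its descendant, so `i` is off the
winner's path and gets `0`. Winning by deviating costs at least `v_w > v_i`, since `w ∈ V_{-i}`;
losing after deviating leaves `i` off the new winner's path, since that winner outbids `w`.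
-/

namespace DiffusionTree

variable {α : Type*}

theorem bstar_le_of_forall_le {b : α → ℝ} {S : Finset α} {M : ℝ} (hM : 0 ≤ M)
    (h : ∀ x ∈ S, b x ≤ M) : bstar b S ≤ M := by
  unfold bstar
  rcases S.eq_empty_or_nonempty with rfl | hS
  · simpa using hM
  · obtain ⟨m, hm⟩ := Finset.max_of_nonempty (hS.image b)
    obtain ⟨x, hx, rfl⟩ := Finset.mem_image.mp (Finset.mem_of_max hm)
    simpa [hm] using h x hx

theorem le_bstar_of_mem (b : α → ℝ) {S : Finset α} {x : α} (hx : x ∈ S) :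
    b x ≤ bstar b S := by
  unfold bstar
  obtain ⟨m, hm⟩ := Finset.max_of_nonempty (Finset.Nonempty.image ⟨x, hx⟩ b)
  have h := Finset.le_max (Finset.mem_image_of_mem b hx)
  rw [hm] at h ⊢
  exact_mod_cast h

theorem bstar_congr {b b' : α → ℝ} {S : Finset α} (h : ∀ x ∈ S, b x = b' x) :
    bstar b S = bstar b' S := by
  rw [bstar, bstar, Finset.image_congr h]

variable (T : DiffusionTree α) (A : Finset α)

theorem Vminus_subset (x : α) : T.Vminus A x ⊆ A :=
  Finset.filter_subset _ _

theorem bstar_update_Vminus (b : α → ℝ) (i : α) (β : ℝ) :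
    bstar (Function.update b i β) (T.Vminus A i) = bstar b (T.Vminus A i) :=
  bstar_congr fun _ hx => Function.update_of_ne (Finset.mem_filter.mp hx).2.1 _ _

theorem desc_pathVx {w : α} {j : ℕ} (hj : j < T.depth w) : T.desc (T.pathVx w j) w :=
  ⟨T.depth w - j, by omega, rfl⟩

variable {A} {b : α → ℝ} {w : α} (v : ℝ)

theorem util_winner : T.util A b w v w = v - bstar b (T.Vminus A w) := by
  simp [util, payment]

theorem util_eq_zero_of_not_desc {x : α} (hxw : x ≠ w) (hx : ¬ T.desc x w) :
    T.util A b w v x = 0 := by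
  have hpath : ¬ ∃ j : ℕ, 1 ≤ j ∧ j < T.depth w ∧ T.pathVx w j = x := by
    rintro ⟨j, -, hj, rfl⟩
    exact hx (T.desc_pathVx hj)
  simp [util, payment, hxw, hpath]

theorem util_le_of_ne_winner {x : α} (hxw : x ≠ w) {M : ℝ} (hM : 0 ≤ M)
    (hb : ∀ j ∈ A, b j ≤ M) : T.util A b w v x ≤ M - bstar b (T.Vminus A x) := by
  have hbound : ∀ y, bstar b (T.Vminus A y) ≤ M := fun y =>
    bstar_le_of_forall_le hM fun j hj => hb j (T.Vminus_subset A y hj)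
  simp only [util, payment, if_neg hxw]
  split_ifs
  · linarith [hbound (T.pathVx w (T.depth x + 1))]
  · linarith [hbound x]

end DiffusionTree

open DiffusionTree in
theorem trdm_truthful_optimal_for_subtree_max_general
    {α : Type*} [Fintype α] (T : DiffusionTree α)
    (v : α → ℝ) (hpos : ∀ j ∈ T.agents, 0 ≤ v j)
    (i : α) (hi : i ∈ T.agents)
    (hitop : ∀ j ∈ T.agents, T.desc i j → v j < v i)
    (β : ℝ)
    -- the winner at the truthful profile: the unique highest bidder
    (w : α) (hw : w ∈ T.agents)
    (hwmax : ∀ j ∈ T.agents, j ≠ w → v j < v w)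
    -- the winner at the deviated profile where `i` bids `β` instead
    (w' : α) (hw' : w' ∈ T.agents)
    (hw'max : ∀ j ∈ T.agents, j ≠ w' →
      Function.update v i β j < Function.update v i β w') :
    T.util T.agents (Function.update v i β) w' (v i) i
      ≤ T.util T.agents v w (v i) i := by
  set b := Function.update v i β
  have hb : ∀ j, j ≠ i → b j = v j := fun j hj => Function.update_of_ne hj _ _
  by_cases hwi : w = i
  · subst hwi
    rw [util_winner]
    by_cases hw'i : w' = w
    · rw [hw'i, util_winner, bstar_update_Vminus]
    · have hbids : ∀ j ∈ T.agents, b j ≤ v w := fun j hj => by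
        rcases eq_or_ne j w' with rfl | hjw'
        · exact hb j hw'i ▸ (hwmax j hj hw'i).le
        · linarith [hw'max j hj hjw', hb w' hw'i, hwmax w' hw' hw'i]
      have := T.util_le_of_ne_winner (v w) (Ne.symm hw'i) (hpos w hw) hbids
      rwa [bstar_update_Vminus] at this
  · have hvi : v i < v w := hwmax i hi (Ne.symm hwi)
    have hiw : ¬ T.desc i w := fun h => (hitop w hw h).not_gt hvi
    rw [T.util_eq_zero_of_not_desc _ (Ne.symm hwi) hiw]
    by_cases hw'i : w' = i
    · have hwV : w ∈ T.Vminus T.agents i := Finset.mem_filter.mpr ⟨hw, hwi, hiw⟩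
      rw [hw'i, util_winner, bstar_update_Vminus]
      linarith [le_bstar_of_mem v hwV]
    · have hvw' : v w ≤ v w' := by
        rcases eq_or_ne w w' with rfl | hww'
        · rfl
        · simpa only [hb w hwi, hb w' hw'i] using (hw'max w hw hww').le
      have hiw' : ¬ T.desc i w' := fun h => (hitop w' hw' h).not_ge (by linarith)
      rw [T.util_eq_zero_of_not_desc _ (Ne.symm hw'i) hiw']

open DiffusionTree in
/-- Under TRDM, truthful bidding is optimal for any agent `i` who
holds the highest valuation in the subtree rooted at itself: if all other agents
bid truthfully and `v_i = max_{j ∈ {i} ∪ D_i} v_j`, then for every alternative bid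
`β ≥ 0` distinct from all other agents' bids, agent `i`'s TRDM utility when bidding
`β` is at most its TRDM utility when bidding `v_i`. -/
theorem trdm_truthful_optimal_for_subtree_max
    {α : Type*} [Fintype α] (T : DiffusionTree α)
    (v : α → ℝ) (hpos : ∀ j ∈ T.agents, 0 ≤ v j)
    (hdist : ∀ j ∈ T.agents, ∀ j' ∈ T.agents, j ≠ j' → v j ≠ v j')
    (i : α) (hi : i ∈ T.agents)
    (hitop : ∀ j ∈ T.agents, T.desc i j → v j < v i)
    (β : ℝ) (hβ : 0 ≤ β)
    (hβdist : ∀ j ∈ T.agents, j ≠ i → β ≠ v j)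
    -- the winner at the truthful profile: the unique highest bidder
    (w : α) (hw : w ∈ T.agents)
    (hwmax : ∀ j ∈ T.agents, j ≠ w → v j < v w)
    -- the winner at the deviated profile where `i` bids `β` instead
    (w' : α) (hw' : w' ∈ T.agents)
    (hw'max : ∀ j ∈ T.agents, j ≠ w' →
      Function.update v i β j < Function.update v i β w') :
    T.util T.agents (Function.update v i β) w' (v i) i
      ≤ T.util T.agents v w (v i) i :=
  trdm_truthful_optimal_for_subtree_max_general T v hpos i hi hitop β w hw hwmax w' hw' hw'max
end

section
/- TRDM is efficient and budget balanced. Under truthful bidding: (i) the item is allocated to the agent with the highest valuation, so the social welfare equals max_{i∈V} v_i; (ii) the payments telescope along the path from s to w, namely p_w + Σ_{j=1}^{k−1} p_{a_j} = b*_{V_{-r_s^*}}, so the sum of all agents' payments equals the seller's revenue Rev = b*_{V_{-r_s^*}}, which is nonnegative. -/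
open Classical

/-!
Writing `f j = b*_{V_{-a_j}}`, the path agent `a_j` pays `f j - f (j + 1)` and the winner `a_k`
pays `f k`, so the payments along the path telescope to `f 1`, the seller's revenue. Every
agent off the path pays nothing, and the path vertices are distinct (`a_j` has depth `j`), so
the total payment is the revenue as well.
-/

namespace DiffusionTree

variable {α : Type*}

theorem bstar_eq_of_forall_le {b : α → ℝ} {S : Finset α} {w : α} (hw : w ∈ S)
    (hmax : ∀ j ∈ S, b j ≤ b w) : bstar b S = b w := by
  have hle : (S.image b).max ≤ b w :=
    Finset.max_le fun _ hy => by
      obtain ⟨j, hj, rfl⟩ := Finset.mem_image.mp hy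
      exact WithBot.coe_le_coe.mpr (hmax j hj)
  rw [bstar, le_antisymm hle (Finset.le_max (Finset.mem_image_of_mem b hw))]
  rfl

theorem bstar_nonneg {b : α → ℝ} {S : Finset α} (h : ∀ i ∈ S, 0 ≤ b i) : 0 ≤ bstar b S := by
  rw [bstar]
  cases hm : (S.image b).max with
  | bot => rfl
  | coe a =>
    obtain ⟨j, hj, rfl⟩ := Finset.mem_image.mp (Finset.mem_of_max hm)
    exact h j hj

variable (T : DiffusionTree α)

theorem iterate_depth (x : α) : T.parent^[T.depth x] x = T.s :=
  Nat.find_spec (T.reaches_s x)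

theorem depth_le_of_iterate_eq {x : α} {n : ℕ} (h : T.parent^[n] x = T.s) : T.depth x ≤ n :=
  Nat.find_min' _ h

theorem depth_pathVx {w : α} {j : ℕ} (hj : j ≤ T.depth w) : T.depth (T.pathVx w j) = j := by
  have hup : T.parent^[j] (T.pathVx w j) = T.s := by
    rw [pathVx, ← Function.iterate_add_apply, Nat.add_sub_cancel' hj, T.iterate_depth]
  have hdown : T.parent^[T.depth (T.pathVx w j) + (T.depth w - j)] w = T.s := by
    rw [Function.iterate_add_apply]
    exact T.iterate_depth _
  have := T.depth_le_of_iterate_eq hup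
  have := T.depth_le_of_iterate_eq hdown
  omega

@[simp]
theorem pathVx_depth (w : α) : T.pathVx w (T.depth w) = w := by
  simp [pathVx]

theorem injOn_pathVx (w : α) : Set.InjOn (T.pathVx w) (Set.Iic (T.depth w)) := by
  intro i hi j hj hij
  rw [← T.depth_pathVx hi, ← T.depth_pathVx hj, hij]

section Payment

variable (A : Finset α) (b : α → ℝ) (w : α)

theorem payment_self : T.payment A b w w = bstar b (T.Vminus A w) := if_pos rfl

theorem payment_pathVx {j : ℕ} (hj : j ∈ Finset.Ico 1 (T.depth w)) :
    T.payment A b w (T.pathVx w j) =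
      bstar b (T.Vminus A (T.pathVx w j)) - bstar b (T.Vminus A (T.pathVx w (j + 1))) := by
  rw [Finset.mem_Ico] at hj
  have hdepth := T.depth_pathVx hj.2.le
  have hne : T.pathVx w j ≠ w := fun h => by rw [h] at hdepth; omega
  rw [payment, if_neg hne, if_pos ⟨j, hj.1, hj.2, rfl⟩, hdepth]

theorem payment_eq_zero_of_notMem_path {w x : α} (hw : 0 < T.depth w)
    (hx : x ∉ (Finset.Icc 1 (T.depth w)).image (T.pathVx w)) : T.payment A b w x = 0 := by
  simp only [Finset.mem_image, Finset.mem_Icc, not_exists, not_and] at hx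
  have hxw : x ≠ w := by
    rintro rfl
    exact hx (T.depth x) ⟨hw, le_rfl⟩ (T.pathVx_depth x)
  rw [payment, if_neg hxw, if_neg]
  rintro ⟨j, hj1, hj2, rfl⟩
  exact hx j ⟨hj1, hj2.le⟩ rfl

theorem payment_add_sum_payment_pathVx (hw : 0 < T.depth w) :
    T.payment A b w w + ∑ j ∈ Finset.Ico 1 (T.depth w), T.payment A b w (T.pathVx w j) =
      bstar b (T.Vminus A (T.pathVx w 1)) := by
  set f : ℕ → ℝ := fun j => bstar b (T.Vminus A (T.pathVx w j))
  have htel : ∑ j ∈ Finset.Ico 1 (T.depth w), (f j - f (j + 1)) = f 1 - f (T.depth w) := by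
    simpa only [Pi.neg_apply, neg_sub_neg] using Finset.sum_Ico_sub (-f) hw
  rw [Finset.sum_congr rfl fun j hj => T.payment_pathVx A b w hj, htel, payment_self]
  simp only [f, pathVx_depth]
  ring

theorem sum_payment_eq_of_path_subset (hw : 0 < T.depth w)
    (hpath : (Finset.Icc 1 (T.depth w)).image (T.pathVx w) ⊆ A) :
    ∑ x ∈ A, T.payment A b w x =
      T.payment A b w w + ∑ j ∈ Finset.Ico 1 (T.depth w), T.payment A b w (T.pathVx w j) := by
  rw [← Finset.sum_subset hpath fun x _ hx => T.payment_eq_zero_of_notMem_path A b hw hx,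
    Finset.sum_image ((T.injOn_pathVx w).mono fun j hj => (Finset.mem_Icc.mp hj).2),
    ← Finset.Ico_add_one_right_eq_Icc, Finset.sum_Ico_succ_top hw, pathVx_depth, add_comm]

end Payment

variable [Fintype α]

theorem mem_agents_iff_depth_pos {x : α} : x ∈ T.agents ↔ 0 < T.depth x := by
  simp [agents, depth]

theorem pathVx_mem_agents {w : α} {j : ℕ} (hj : j ∈ Finset.Icc 1 (T.depth w)) :
    T.pathVx w j ∈ T.agents := by
  rw [Finset.mem_Icc] at hj
  rw [mem_agents_iff_depth_pos, T.depth_pathVx hj.2]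
  omega

end DiffusionTree

open DiffusionTree in
theorem trdm_efficient_budget_balanced_general
    {α : Type*} [Fintype α] (T : DiffusionTree α)
    (v : α → ℝ) (hpos : ∀ i ∈ T.agents, 0 ≤ v i)
    (w : α) (hw : w ∈ T.agents)
    (hmax : ∀ j ∈ T.agents, j ≠ w → v j < v w) :
    -- (i) efficiency: the winner's valuation is the maximum valuation
    v w = bstar v T.agents ∧
    -- (ii) telescoping of the payments along the path from `s` to `w`
    (T.payment T.agents v w w
        + ∑ j ∈ Finset.Ico 1 (T.depth w), T.payment T.agents v w (T.pathVx w j)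
      = bstar v (T.Vminus T.agents (T.pathVx w 1))) ∧
    -- the total payment equals the seller's revenue `b*_{V_{-r_s^*}}` …
    (∑ x ∈ T.agents, T.payment T.agents v w x
      = bstar v (T.Vminus T.agents (T.pathVx w 1))) ∧
    -- … which is nonnegative (budget balance)
    0 ≤ bstar v (T.Vminus T.agents (T.pathVx w 1)) := by
  have hd : 0 < T.depth w := T.mem_agents_iff_depth_pos.mp hw
  have htel := T.payment_add_sum_payment_pathVx T.agents v w hd
  refine ⟨(bstar_eq_of_forall_le hw fun j hj => ?_).symm, htel, ?_,
    bstar_nonneg fun i hi => hpos i (Finset.filter_subset _ _ hi)⟩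
  · rcases eq_or_ne j w with rfl | hjw
    exacts [le_rfl, (hmax j hj hjw).le]
  · rw [T.sum_payment_eq_of_path_subset T.agents v w hd
      (Finset.image_subset_iff.mpr fun j hj => T.pathVx_mem_agents hj), htel]

open DiffusionTree in
/-- TRDM is efficient and budget balanced. Under truthful bidding:
(i) the item is allocated to the agent with the highest valuation, so the social
welfare equals `max_{i∈V} v_i`; (ii) the payments telescope along the path from `s`
to `w`: `p_w + Σ_{j=1}^{k−1} p_{a_j} = b*_{V_{-r_s^*}}`, so the sum of all agents'
payments equals the seller's revenue `Rev = b*_{V_{-r_s^*}}`, which is nonnegative. -/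
theorem trdm_efficient_budget_balanced
    {α : Type*} [Fintype α] (T : DiffusionTree α)
    (v : α → ℝ) (hpos : ∀ i ∈ T.agents, 0 ≤ v i)
    (hdist : ∀ i ∈ T.agents, ∀ j ∈ T.agents, i ≠ j → v i ≠ v j)
    (w : α) (hw : w ∈ T.agents)
    (hmax : ∀ j ∈ T.agents, j ≠ w → v j < v w) :
    -- (i) efficiency: the winner's valuation is the maximum valuation
    v w = bstar v T.agents ∧
    -- (ii) telescoping of the payments along the path from `s` to `w`
    (T.payment T.agents v w w
        + ∑ j ∈ Finset.Ico 1 (T.depth w), T.payment T.agents v w (T.pathVx w j)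
      = bstar v (T.Vminus T.agents (T.pathVx w 1))) ∧
    -- the total payment equals the seller's revenue `b*_{V_{-r_s^*}}` …
    (∑ x ∈ T.agents, T.payment T.agents v w x
      = bstar v (T.Vminus T.agents (T.pathVx w 1))) ∧
    -- … which is nonnegative (budget balance)
    0 ≤ bstar v (T.Vminus T.agents (T.pathVx w 1)) :=
  trdm_efficient_budget_balanced_general T v hpos w hw hmax
end
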